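/- The sequence υ_n = 3/2 + (1/2)·(1 + 2nΓ(n/2)² / (πΓ((n+1)/2)²))^{-1} is strictly increasing in n and converges to 2(3+π)/(4+π) as n → ∞. -/

import Mathlib

open Real Filter intervalIntegral

noncomputable def JJ (n : ℕ) : ℝ := ∫ x in (0:ℝ)..π, Real.sin x ^ n

lemma JJ_pos (n : ℕ) : 0 < JJ n := integral_sin_pow_pos n

lemma JJ_succ_le (n : ℕ) : JJ (n + 1) ≤ JJ n := integral_sin_pow_succ_le n

lemma JJ_rec (n : ℕ) : JJ (n + 2) * ((n : ℝ) + 2) = ((n : ℝ) + 1) * JJ n := by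
  rw [JJ, JJ, integral_sin_pow]
  have h2 : ((n:ℝ) + 2) ≠ 0 := by positivity
  field_simp
  simp

lemma JJ_zero : JJ 0 = π := by simp [JJ]

lemma JJ_one : JJ 1 = 2 := by simp [JJ]; norm_num

lemma JJ_mul (n : ℕ) : ((n : ℝ) + 1) * (JJ n * JJ (n + 1)) = 2 * π := by
  induction n with
  | zero => simp [JJ_zero, JJ_one]; ring
  | succ k ih =>
      push_cast
      linear_combination JJ (k+1) * (JJ_rec k) + ih

lemma JJ_sq_lt (m : ℕ) : JJ (m + 1) ^ 2 < JJ m * JJ (m + 2) := by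
  set t : ℝ := JJ (m + 1) / JJ (m + 2) with ht
  have h2 := JJ_pos (m + 2)
  have h1 := JJ_pos (m + 1)
  have h0 := JJ_pos m
  have ht32 : t ≤ 3 / 2 := by
    rw [ht, div_le_iff₀ h2]
    have h3 : JJ (m + 3) ≤ JJ (m + 2) := JJ_succ_le (m + 2)
    have h4 : JJ (m + 3) * ((m:ℝ) + 3) = ((m:ℝ) + 2) * JJ (m + 1) := by
      have := JJ_rec (m + 1); push_cast at this ⊢; linarith [this]
    have hm3 : (0:ℝ) < (m:ℝ) + 3 := by positivity
    nlinarith [JJ_pos (m + 3)]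
  have htpos : 0 < t := div_pos h1 h2
  have key : 0 < ∫ x in (0:ℝ)..π, Real.sin x ^ m * (1 - t * Real.sin x) ^ 2 := by
    have hsplit : (∫ x in (0:ℝ)..π, Real.sin x ^ m * (1 - t * Real.sin x) ^ 2)
        = (∫ x in (0:ℝ)..(π/6), Real.sin x ^ m * (1 - t * Real.sin x) ^ 2)
        + ∫ x in (π/6:ℝ)..π, Real.sin x ^ m * (1 - t * Real.sin x) ^ 2 := by
      rw [intervalIntegral.integral_add_adjacent_intervals] <;>
        exact (by fun_prop : Continuous fun x : ℝ => Real.sin x ^ m * (1 - t * Real.sin x) ^ 2).intervalIntegrable _ _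
    rw [hsplit]
    have hpos1 : 0 < ∫ x in (0:ℝ)..(π/6), Real.sin x ^ m * (1 - t * Real.sin x) ^ 2 := by
      apply intervalIntegral_pos_of_pos_on
      · exact (by fun_prop : Continuous fun x : ℝ => Real.sin x ^ m * (1 - t * Real.sin x) ^ 2).intervalIntegrable _ _
      · intro x hx
        have hx0 : 0 < x := hx.1
        have hxpi : x < π := lt_trans hx.2 (by linarith [pi_pos])
        have hsinpos : 0 < Real.sin x := Real.sin_pos_of_pos_of_lt_pi hx0 hxpi
        have hsinlt : Real.sin x < 1 / 2 := by
          have : Real.sin x < Real.sin (π / 6) := by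
            apply Real.strictMonoOn_sin ⟨by linarith [pi_pos, hx.1, hx.2], by linarith [pi_pos, hx.1, hx.2]⟩
              ⟨by linarith [pi_pos], by linarith [pi_pos]⟩ hx.2
          rwa [Real.sin_pi_div_six] at this
        have hfac : 0 < 1 - t * Real.sin x := by nlinarith
        positivity
      · linarith [pi_pos]
    have hpos2 : 0 ≤ ∫ x in (π/6:ℝ)..π, Real.sin x ^ m * (1 - t * Real.sin x) ^ 2 := by
      apply intervalIntegral.integral_nonneg (by linarith [pi_pos])
      intro x hx
      have : 0 ≤ Real.sin x := Real.sin_nonneg_of_nonneg_of_le_pi (by linarith [pi_pos, hx.1]) hx.2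
      positivity
    linarith
  have hexp : (∫ x in (0:ℝ)..π, Real.sin x ^ m * (1 - t * Real.sin x) ^ 2)
      = JJ m - 2 * t * JJ (m+1) + t^2 * JJ (m+2) := by
    have hc1 : IntervalIntegrable (fun x : ℝ => Real.sin x ^ m) MeasureTheory.volume 0 π :=
      (by fun_prop : Continuous fun x : ℝ => Real.sin x ^ m).intervalIntegrable _ _
    have hc2 : IntervalIntegrable (fun x : ℝ => 2 * t * Real.sin x ^ (m+1)) MeasureTheory.volume 0 π :=
      (by fun_prop : Continuous fun x : ℝ => 2 * t * Real.sin x ^ (m+1)).intervalIntegrable _ _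
    have hc3 : IntervalIntegrable (fun x : ℝ => t^2 * Real.sin x ^ (m+2)) MeasureTheory.volume 0 π :=
      (by fun_prop : Continuous fun x : ℝ => t^2 * Real.sin x ^ (m+2)).intervalIntegrable _ _
    have heq : (∫ x in (0:ℝ)..π, Real.sin x ^ m * (1 - t * Real.sin x) ^ 2)
        = ∫ x in (0:ℝ)..π, (Real.sin x ^ m - 2 * t * Real.sin x ^ (m+1) + t^2 * Real.sin x ^ (m+2)) := by
      apply intervalIntegral.integral_congr
      intro x _
      ring
    rw [heq, intervalIntegral.integral_add (hc1.sub hc2) hc3, intervalIntegral.integral_sub hc1 hc2,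
      intervalIntegral.integral_const_mul, intervalIntegral.integral_const_mul]
    rfl
  rw [hexp] at key
  have key2 : 0 < (JJ m - 2 * t * JJ (m+1) + t^2 * JJ (m+2)) * JJ (m + 2) := mul_pos key h2
  rw [ht] at key2
  field_simp at key2
  nlinarith [key2]

lemma b_lt (n : ℕ) (hn : 1 ≤ n) : (n:ℝ) * JJ n ^ 2 < ((n:ℝ) + 1) * JJ (n + 1) ^ 2 := by
  obtain ⟨m, rfl⟩ : ∃ m, n = m + 1 := ⟨n - 1, by omega⟩
  push_cast
  have h := JJ_sq_lt m
  have hrec := JJ_rec m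
  have h2 := JJ_pos (m + 2)
  have h1 := JJ_pos (m + 1)
  have h0 := JJ_pos m
  nlinarith [h, hrec, h2, h1, h0, mul_pos h0 h2]

lemma gamma_bridge (n : ℕ) (hn : 1 ≤ n) :
    Real.Gamma (((n:ℝ) + 1) / 2) * (2 * Real.sqrt π) = Real.Gamma ((n:ℝ) / 2) * ((n:ℝ) * JJ n) := by
  have hs : (0:ℝ) < Real.sqrt π := Real.sqrt_pos.mpr Real.pi_pos
  have hss : Real.sqrt π * Real.sqrt π = π := Real.mul_self_sqrt Real.pi_pos.le
  induction n, hn using Nat.le_induction with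
  | base =>
      norm_num
      rw [Real.Gamma_one_half_eq, JJ_one]
      ring
  | succ n hn ih =>
      have hne : (2 * Real.sqrt π) ≠ 0 := by positivity
      apply mul_right_cancel₀ hne
      push_cast
      have hn' : ((n:ℝ)/2) ≠ 0 := by
        have : (1:ℝ) ≤ (n:ℝ) := by exact_mod_cast hn
        positivity
      have hgam : Real.Gamma (((n:ℝ) + 1 + 1) / 2) = ((n:ℝ)/2) * Real.Gamma ((n:ℝ)/2) := by
        rw [show ((n:ℝ) + 1 + 1) / 2 = (n:ℝ)/2 + 1 by ring, Real.Gamma_add_one hn']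
      rw [hgam]
      linear_combination (-((n:ℝ) + 1)) * JJ (n + 1) * ih
        - (n:ℝ) * Real.Gamma ((n:ℝ)/2) * (JJ_mul n)
        + 2 * (n:ℝ) * Real.Gamma ((n:ℝ)/2) * hss


/-- `υ_n = 3/2 + (1/2)·(1 + 2nΓ(n/2)² / (πΓ((n+1)/2)²))⁻¹`. -/
noncomputable def upsilon (n : ℕ) : ℝ :=
  3 / 2 + (1 / 2) *
    (1 + 2 * (n : ℝ) * (Real.Gamma ((n : ℝ) / 2)) ^ 2 /
      (Real.pi * (Real.Gamma (((n : ℝ) + 1) / 2)) ^ 2))⁻¹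

lemma upsilon_eq (n : ℕ) (hn : 1 ≤ n) :
    upsilon n = 3 / 2 + (1 / 2) * (1 + 8 / ((n:ℝ) * JJ n ^ 2))⁻¹ := by
  have hn0 : (0:ℝ) < (n:ℝ) := by exact_mod_cast hn
  have hΓ1 : 0 < Real.Gamma ((n:ℝ)/2) := Real.Gamma_pos_of_pos (by positivity)
  have hΓ2 : 0 < Real.Gamma (((n:ℝ)+1)/2) := Real.Gamma_pos_of_pos (by positivity)
  have hJ := JJ_pos n
  have hπ := Real.pi_pos
  have hb := gamma_bridge n hn
  have hsq : Real.Gamma (((n:ℝ)+1)/2)^2 * (4*π) = Real.Gamma ((n:ℝ)/2)^2 * ((n:ℝ) * JJ n)^2 := by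
    have h := congrArg (· ^ 2) hb
    simp only [mul_pow] at h
    have hss : Real.sqrt π ^ 2 = π := Real.sq_sqrt Real.pi_pos.le
    nlinarith [h, hss]
  rw [upsilon]
  have key : 2 * (n:ℝ) * (Real.Gamma ((n:ℝ)/2))^2 / (π * (Real.Gamma (((n:ℝ)+1)/2))^2)
      = 8 / ((n:ℝ) * JJ n ^ 2) := by
    rw [div_eq_div_iff (by positivity) (by positivity)]
    nlinarith [hsq]
  rw [key]

/-- the sequence `(υ_n)_{n ≥ 1}` is strictly increasing and converges to
`2(3+π)/(4+π)` as `n → ∞`. -/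
theorem stmt12 :
    (∀ n : ℕ, 1 ≤ n → upsilon n < upsilon (n + 1)) ∧
    Filter.Tendsto upsilon Filter.atTop (nhds (2 * (3 + Real.pi) / (4 + Real.pi))) := by
  have hπ := Real.pi_pos
  constructor
  · intro n hn
    rw [upsilon_eq n hn, upsilon_eq (n+1) (by omega)]
    push_cast
    have hn0 : (0:ℝ) < (n:ℝ) := by exact_mod_cast hn
    have hJ := JJ_pos n
    have hJ' := JJ_pos (n+1)
    have hb := b_lt n hn
    have hx : (0:ℝ) < (n:ℝ) * JJ n ^ 2 := by positivity
    have hy : (0:ℝ) < ((n:ℝ)+1) * JJ (n+1) ^ 2 := by positivity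
    have h1 : 1 + 8 / (((n:ℝ)+1) * JJ (n+1) ^ 2) < 1 + 8 / ((n:ℝ) * JJ n ^ 2) := by
      have := div_lt_div_of_pos_left (by norm_num : (0:ℝ) < 8) hx hb
      linarith
    have h2 : (0:ℝ) < 1 + 8 / (((n:ℝ)+1) * JJ (n+1) ^ 2) := by positivity
    have h3 : (1 + 8 / ((n:ℝ) * JJ n ^ 2))⁻¹ < (1 + 8 / (((n:ℝ)+1) * JJ (n+1) ^ 2))⁻¹ :=
      inv_strictAnti₀ h2 h1
    linarith
  · have hbnd : Tendsto (fun n : ℕ => (n:ℝ) * JJ n ^ 2) atTop (nhds (2*π)) := by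
      apply tendsto_of_tendsto_of_tendsto_of_le_of_le'
        (g := fun n : ℕ => 2*π * ((n:ℝ) / ((n:ℝ) + 1))) (h := fun _ : ℕ => 2*π)
      · have h := tendsto_natCast_div_add_atTop (1:ℝ)
        have := h.const_mul (2*π)
        simpa using this
      · exact tendsto_const_nhds
      · filter_upwards with n
        have hJ := JJ_pos n
        have hle : JJ (n+1) ≤ JJ n := JJ_succ_le n
        have hm := JJ_mul n
        have hn1 : (0:ℝ) < (n:ℝ) + 1 := by positivity
        rw [← mul_div_assoc, div_le_iff₀ hn1]
        nlinarith [mul_nonneg (mul_nonneg (mul_nonneg (Nat.cast_nonneg (α := ℝ) n) hn1.le) hJ.le)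
          (sub_nonneg.mpr hle), hm]
      · filter_upwards [eventually_ge_atTop 1] with n hn
        obtain ⟨m, rfl⟩ : ∃ m, n = m + 1 := ⟨n - 1, by omega⟩
        have hm := JJ_mul m
        have hle : JJ (m+1) ≤ JJ m := JJ_succ_le m
        have hJ := JJ_pos (m+1)
        push_cast
        nlinarith [hm, hle, hJ]
    have h8 : Tendsto (fun n : ℕ => 8 / ((n:ℝ) * JJ n ^ 2)) atTop (nhds (8 / (2*π))) :=
      tendsto_const_nhds.div hbnd (by positivity)
    have hlim : Tendsto (fun n : ℕ => 3 / 2 + (1 / 2) * (1 + 8 / ((n:ℝ) * JJ n ^ 2))⁻¹)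
        atTop (nhds (3 / 2 + (1 / 2) * (1 + 8 / (2*π))⁻¹)) := by
      exact tendsto_const_nhds.add (tendsto_const_nhds.mul
        ((tendsto_const_nhds.add h8).inv₀ (by positivity)))
    have heq : (fun n : ℕ => 3 / 2 + (1 / 2) * (1 + 8 / ((n:ℝ) * JJ n ^ 2))⁻¹) =ᶠ[atTop] upsilon := by
      filter_upwards [eventually_ge_atTop 1] with n hn
      exact (upsilon_eq n hn).symm
    have := hlim.congr' heq
    convert this using 2
    have h4 : (4:ℝ) + π ≠ 0 := by positivity
    have h2 : (2:ℝ)*π ≠ 0 := by positivity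
    field_simp
    ring
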